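/- Assume D = 0 and T = 1. For every x ∈ ℝ^L with all components ≥ 0, the dissipation ∑_{k}∑_{j ~ k} q_{kj}(x)·q_{jk}(x)·( N_k(x) − N_j(x) )² vanishes if and only if x is a critical point, i.e. f(x) = 0. -/

import Mathlib

open Finset Filter

/-- `auxN G κ a i = κ + ∑_{j ~ i} a_j`. -/
noncomputable def auxN {L : ℕ} (G : SimpleGraph (Fin L)) [DecidableRel G.Adj] (κ : ℝ)
    (a : Fin L → ℝ) (i : Fin L) : ℝ :=
  κ + ∑ j ∈ G.neighborFinset i, a j

/-- The auxin transport vector field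
`f_i(a) = D·∑_{k ~ i}(a_k − a_i) + T·∑_{k ~ i}(a_k·a_i/N_k(a) − a_i·a_k/N_i(a))`. -/
noncomputable def auxF {L : ℕ} (G : SimpleGraph (Fin L)) [DecidableRel G.Adj] (κ D T : ℝ)
    (a : Fin L → ℝ) (i : Fin L) : ℝ :=
  D * ∑ k ∈ G.neighborFinset i, (a k - a i) +
    T * ∑ k ∈ G.neighborFinset i,
      (a k * a i / auxN G κ a k - a i * a k / auxN G κ a i)

/-!
Write `t_{kj} = x_j x_k (N_k - N_j)² / (N_k N_j)` for the dissipation term of an edge and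
`N_k f_k = ∑_{j ~ k} x_j x_k (N_k - N_j) / N_j`. Symmetrising the latter over the edge `{j, k}`
gives `t_{kj}`, so the dissipation equals `2 ∑_k N_k f_k`: critical points have zero dissipation.
Conversely, the dissipation is a sum of nonnegative terms, so if it vanishes then on every edge
`x_j = 0`, `x_k = 0` or `N_j = N_k`, which kills every flux term of `f`.
-/

namespace SimpleGraph

variable {V M : Type*} [Fintype V] [AddCommMonoid M] (G : SimpleGraph V) [DecidableRel G.Adj]

theorem sum_sum_neighborFinset_comm (g : V → V → M) :
    ∑ k, ∑ j ∈ G.neighborFinset k, g k j = ∑ k, ∑ j ∈ G.neighborFinset k, g j k :=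
  Finset.sum_comm' fun k j => by simp [G.adj_comm]

end SimpleGraph

section Transport

variable {V : Type*} [Fintype V] (G : SimpleGraph V) [DecidableRel G.Adj] (x N : V → ℝ)

/-- The transport part of the auxin vector field, with the normalisations `N` as a parameter. -/
noncomputable def transportField (i : V) : ℝ :=
  ∑ k ∈ G.neighborFinset i, (x k * x i / N k - x i * x k / N i)

noncomputable def transportDissipation : ℝ :=
  ∑ k, ∑ j ∈ G.neighborFinset k, (x j / N k) * (x k / N j) * (N k - N j) ^ 2

variable {G x N}

theorem transportDissipation_eq_two_mul_sum (hN : ∀ i, N i ≠ 0) :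
    transportDissipation G x N = 2 * ∑ k, N k * transportField G x N k := by
  set p : V → V → ℝ := fun k j => N k * (x j * x k / N j - x k * x j / N k)
  have hsplit : ∀ k j, (x j / N k) * (x k / N j) * (N k - N j) ^ 2 = p k j + p j k := by
    intro k j
    have := hN k
    have := hN j
    simp only [p]
    field_simp
    ring
  calc transportDissipation G x N
      = ∑ k, ∑ j ∈ G.neighborFinset k, p k j + ∑ k, ∑ j ∈ G.neighborFinset k, p j k := by
        simp only [transportDissipation, hsplit, sum_add_distrib]
    _ = 2 * ∑ k, ∑ j ∈ G.neighborFinset k, p k j := by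
        rw [← G.sum_sum_neighborFinset_comm]
        ring
    _ = 2 * ∑ k, N k * transportField G x N k := by
        simp only [p, transportField, mul_sum]

theorem transportDissipation_eq_zero_iff_forall_adj (hx : ∀ i, 0 ≤ x i) (hN : ∀ i, 0 < N i) :
    transportDissipation G x N = 0 ↔
      ∀ k, ∀ j ∈ G.neighborFinset k, x j = 0 ∨ x k = 0 ∨ N k = N j := by
  have hterm : ∀ k j, 0 ≤ (x j / N k) * (x k / N j) * (N k - N j) ^ 2 := fun k j =>
    mul_nonneg (mul_nonneg (div_nonneg (hx j) (hN k).le) (div_nonneg (hx k) (hN j).le))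
      (sq_nonneg _)
  rw [transportDissipation, sum_eq_zero_iff_of_nonneg fun k _ => sum_nonneg fun j _ => hterm k j]
  simp only [mem_univ, true_implies, sum_eq_zero_iff_of_nonneg fun j _ => hterm _ j]
  simp [(hN _).ne', sub_eq_zero, or_assoc]

theorem transportField_eq_zero_of_forall_adj
    (h : ∀ k, ∀ j ∈ G.neighborFinset k, x j = 0 ∨ x k = 0 ∨ N k = N j) (i : V) :
    transportField G x N i = 0 := by
  refine sum_eq_zero fun k hk => ?_
  rcases h i k hk with hxk | hxi | hNik
  · simp [hxk]
  · simp [hxi]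
  · rw [hNik, mul_comm, sub_self]

theorem transportDissipation_eq_zero_iff (hx : ∀ i, 0 ≤ x i) (hN : ∀ i, 0 < N i) :
    transportDissipation G x N = 0 ↔ ∀ i, transportField G x N i = 0 := by
  refine ⟨fun h => transportField_eq_zero_of_forall_adj
    ((transportDissipation_eq_zero_iff_forall_adj hx hN).mp h), fun h => ?_⟩
  simp [transportDissipation_eq_two_mul_sum fun i => (hN i).ne', h]

end Transport

theorem auxN_pos {L : ℕ} (G : SimpleGraph (Fin L)) [DecidableRel G.Adj] {κ : ℝ} (hκ : 0 < κ)
    {x : Fin L → ℝ} (hx : ∀ i, 0 ≤ x i) (i : Fin L) : 0 < auxN G κ x i :=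
  add_pos_of_pos_of_nonneg hκ (sum_nonneg fun j _ => hx j)

theorem auxF_zero_one {L : ℕ} (G : SimpleGraph (Fin L)) [DecidableRel G.Adj] (κ : ℝ)
    (x : Fin L → ℝ) (i : Fin L) : auxF G κ 0 1 x i = transportField G x (auxN G κ x) i := by
  simp [auxF, transportField]

theorem auxin_dissipation_zero_iff_critical_general {L : ℕ} (G : SimpleGraph (Fin L))
    [DecidableRel G.Adj] (κ : ℝ) (hκ : 0 < κ)
    (x : Fin L → ℝ) (hx : ∀ i, 0 ≤ x i) :
    (∑ k, ∑ j ∈ G.neighborFinset k,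
        (x j / auxN G κ x k) * (x k / auxN G κ x j) *
          (auxN G κ x k - auxN G κ x j) ^ 2 = 0) ↔
      (∀ i, auxF G κ 0 1 x i = 0) := by
  simp only [auxF_zero_one]
  exact transportDissipation_eq_zero_iff hx (auxN_pos G hκ hx)

/-- For pure transport (`D = 0`, `T = 1`) and nonnegative `x`, the dissipation
`∑_k ∑_{j~k} q_{kj}(x) q_{jk}(x) (N_k(x) − N_j(x))²` vanishes iff `x` is a critical point. -/
theorem auxin_dissipation_zero_iff_critical {L : ℕ} (hL : 1 ≤ L) (G : SimpleGraph (Fin L))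
    [DecidableRel G.Adj] (κ : ℝ) (hκ : 0 < κ)
    (x : Fin L → ℝ) (hx : ∀ i, 0 ≤ x i) :
    (∑ k, ∑ j ∈ G.neighborFinset k,
        (x j / auxN G κ x k) * (x k / auxN G κ x j) *
          (auxN G κ x k - auxN G κ x j) ^ 2 = 0) ↔
      (∀ i, auxF G κ 0 1 x i = 0) :=
  auxin_dissipation_zero_iff_critical_general G κ hκ x hx
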